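/- Let c > 0 be a real number and define r(t) = ∫₀ᵗ e^{s²/(4c)} ds and K(t) = -e^{-t²/(2c)}/c for t > 0. Then for every real α > 1 and every T > 0 there exists t ≥ T such that K(t) > -α(α-1)/r(t)². In particular, there is no constant α > 1 for which K(t) ≤ -α(α-1)/r(t)² holds for all sufficiently large t. -/

import Mathlib

/-!
On `[0, t]` we have `s² ≤ t s`, so `r(t) ≤ ∫₀ᵗ e^{ts/(4c)} ds ≤ (4c/t) e^{t²/(4c)}`. Hence
`-K(t) r(t)² = e^{-t²/(2c)} r(t)² / c ≤ 16c/t² → 0`, which eventually drops below any `α(α-1) > 0`.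
-/

open Real Filter MeasureTheory Topology

theorem integral_exp_sq_div_le {b t : ℝ} (hb : 0 < b) (ht : 0 < t) :
    ∫ s in (0:ℝ)..t, exp (s ^ 2 / b) ≤ b / t * exp (t ^ 2 / b) := by
  have hk : t / b ≠ 0 := by positivity
  calc ∫ s in (0:ℝ)..t, exp (s ^ 2 / b)
      ≤ ∫ s in (0:ℝ)..t, exp (t / b * s) := by
        refine intervalIntegral.integral_mono_on ht.le
          ((by fun_prop : Continuous fun s : ℝ => exp (s ^ 2 / b)).intervalIntegrable _ _)
          ((by fun_prop : Continuous fun s : ℝ => exp (t / b * s)).intervalIntegrable _ _)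
          fun s hs => ?_
        rw [exp_le_exp, div_mul_eq_mul_div, div_le_div_iff_of_pos_right hb]
        nlinarith [hs.1, hs.2]
    _ = b / t * (exp (t ^ 2 / b) - 1) := by
        rw [intervalIntegral.integral_comp_mul_left (fun s => exp s) hk, integral_exp, smul_eq_mul,
          inv_div, mul_zero, exp_zero, div_mul_eq_mul_div t b t, ← sq]
    _ ≤ b / t * exp (t ^ 2 / b) := by
        gcongr
        exact sub_le_self _ zero_le_one

theorem exp_neg_sq_div_mul_integral_sq_le {c t : ℝ} (hc : 0 < c) (ht : 0 < t) :
    exp (-t ^ 2 / (2 * c)) * (∫ s in (0:ℝ)..t, exp (s ^ 2 / (4 * c))) ^ 2 ≤ (4 * c / t) ^ 2 := by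
  have hI : 0 ≤ ∫ s in (0:ℝ)..t, exp (s ^ 2 / (4 * c)) :=
    intervalIntegral.integral_nonneg ht.le fun s _ => (exp_pos _).le
  have hcancel : exp (-t ^ 2 / (2 * c)) * exp (t ^ 2 / (4 * c)) ^ 2 = 1 := by
    rw [← exp_nat_mul, ← exp_add, ← exp_zero]
    congr 1
    field_simp
    ring
  calc exp (-t ^ 2 / (2 * c)) * (∫ s in (0:ℝ)..t, exp (s ^ 2 / (4 * c))) ^ 2
      ≤ exp (-t ^ 2 / (2 * c)) * (4 * c / t * exp (t ^ 2 / (4 * c))) ^ 2 := by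
        gcongr
        exact integral_exp_sq_div_le (by positivity) ht
    _ = (4 * c / t) ^ 2 := by rw [mul_pow, mul_left_comm, hcancel, mul_one]

theorem tendsto_exp_neg_sq_div_mul_integral_sq {c : ℝ} (hc : 0 < c) :
    Tendsto (fun t => exp (-t ^ 2 / (2 * c)) * (∫ s in (0:ℝ)..t, exp (s ^ 2 / (4 * c))) ^ 2)
      atTop (𝓝 0) := by
  have hbound : Tendsto (fun t : ℝ => (4 * c / t) ^ 2) atTop (𝓝 0) := by
    simpa using (tendsto_id.const_div_atTop (4 * c)).pow 2
  refine squeeze_zero' (Eventually.of_forall fun t => by positivity) ?_ hbound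
  filter_upwards [eventually_gt_atTop 0] with t ht
  exact exp_neg_sq_div_mul_integral_sq_le hc ht

theorem eventually_neg_div_integral_sq_lt {c a : ℝ} (hc : 0 < c) (ha : 0 < a) :
    ∀ᶠ t in atTop,
      -a / (∫ s in (0:ℝ)..t, exp (s ^ 2 / (4 * c))) ^ 2 < -exp (-t ^ 2 / (2 * c)) / c := by
  filter_upwards [(tendsto_exp_neg_sq_div_mul_integral_sq hc).eventually
    (gt_mem_nhds (mul_pos ha hc)), eventually_gt_atTop 0] with t hsmall ht
  have hI : 0 < ∫ s in (0:ℝ)..t, exp (s ^ 2 / (4 * c)) :=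
    intervalIntegral.intervalIntegral_pos_of_pos
      ((by fun_prop : Continuous fun s : ℝ => exp (s ^ 2 / (4 * c))).intervalIntegrable _ _)
      (fun _ => exp_pos _) ht
  rw [neg_div, neg_div, neg_lt_neg_iff, div_lt_div_iff₀ hc (by positivity)]
  exact hsmall

/-- Remark 2.4: with `r(t) = ∫₀ᵗ e^{s²/(4c)} ds` and `K(t) = -e^{-t²/(2c)}/c` (c > 0), for every
`α > 1` and every `T > 0` there is `t ≥ T` with `K(t) > -α(α-1)/r(t)²`; in particular there is
no constant `α > 1` with `K(t) ≤ -α(α-1)/r(t)²` for all sufficiently large `t`. -/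
theorem stmt12 (c : ℝ) (hc : 0 < c)
    (r K : ℝ → ℝ)
    (hr : r = fun t => ∫ s in (0:ℝ)..t, Real.exp (s ^ 2 / (4 * c)))
    (hK : K = fun t => -Real.exp (-t ^ 2 / (2 * c)) / c) :
    (∀ α : ℝ, 1 < α → ∀ T : ℝ, 0 < T → ∃ t, T ≤ t ∧ -(α * (α - 1)) / r t ^ 2 < K t) ∧
    ¬ ∃ α : ℝ, 1 < α ∧ ∃ T : ℝ, ∀ t, T ≤ t → K t ≤ -(α * (α - 1)) / r t ^ 2 := by
  have key (α : ℝ) (hα : 1 < α) (T : ℝ) : ∃ t, T ≤ t ∧ -(α * (α - 1)) / r t ^ 2 < K t := by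
    subst hr hK
    have hpos : 0 < α * (α - 1) := mul_pos (by linarith) (by linarith)
    exact ((eventually_ge_atTop T).and (eventually_neg_div_integral_sq_lt hc hpos)).exists
  refine ⟨fun α hα T _ => key α hα T, ?_⟩
  rintro ⟨α, hα, T, hle⟩
  obtain ⟨t, hTt, hlt⟩ := key α hα T
  exact (hle t hTt).not_gt hlt
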